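/- The filtered signal via the ideal FFT filter of a real signal is real: if x : Fin N → ℝ and P ⊆ Fin N is closed under k ↦ (N - k) % N, then every value of T x = IDFT(F(DFT x)) has zero imaginary part. -/

import Mathlib

/-!
The DFT of a real signal is conjugate symmetric, `conj (X k) = X (-k)` with `-k = (N - k) % N`,
because conjugating the kernel `exp (-2πi k n / N)` gives `exp (-2πi (-k) n / N)`. Zeroing the
coefficients outside a set closed under `k ↦ -k` keeps this symmetry, and the inverse DFT of a
conjugate-symmetric sequence is fixed by conjugation: the reindexing `k ↦ -k` turns its conjugate
back into itself.
-/

open ComplexConjugate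

theorem Fin.dvd_val_neg_add_val {N : ℕ} (k : Fin N) : N ∣ ((-k : Fin N) : ℕ) + k := by
  rw [Fin.val_neg', ← Nat.modEq_zero_iff_dvd]
  calc (N - k) % N + k ≡ N - k + k [MOD N] := (Nat.mod_modEq _ _).add_right _
    _ = N := Nat.sub_add_cancel k.is_le'
    _ ≡ 0 [MOD N] := Nat.modEq_zero_iff_dvd.2 dvd_rfl

namespace Complex

theorem exp_neg_two_pi_I_div_eq_of_dvd_add {N a b : ℕ} (h : N ∣ a + b) (m : ℕ) :
    exp (-2 * (Real.pi : ℂ) * I * (a : ℂ) * (m : ℂ) / (N : ℂ)) =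
      exp (2 * (Real.pi : ℂ) * I * (b : ℂ) * (m : ℂ) / (N : ℂ)) := by
  rcases eq_or_ne N 0 with rfl | hN
  · simp -- both exponents are `_ / 0 = 0`
  obtain ⟨t, ht⟩ := h
  have hab : (a : ℂ) = N * t - b := by
    rw [eq_sub_iff_add_eq]
    exact_mod_cast ht
  rw [exp_eq_exp_iff_exists_int]
  refine ⟨-(t * m), ?_⟩
  rw [hab]
  field_simp
  push_cast
  ring

theorem conj_exp_two_pi_I_div (N a m : ℕ) :
    conj (exp (2 * (Real.pi : ℂ) * I * (a : ℂ) * (m : ℂ) / (N : ℂ))) =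
      exp (-2 * (Real.pi : ℂ) * I * (a : ℂ) * (m : ℂ) / (N : ℂ)) := by
  rw [← exp_conj]
  simp [map_ofNat, neg_div]

theorem conj_exp_neg_two_pi_I_div (N a m : ℕ) :
    conj (exp (-2 * (Real.pi : ℂ) * I * (a : ℂ) * (m : ℂ) / (N : ℂ))) =
      exp (2 * (Real.pi : ℂ) * I * (a : ℂ) * (m : ℂ) / (N : ℂ)) := by
  rw [← conj_exp_two_pi_I_div, conj_conj]

end Complex

open Complex

def IsConjSymmetric {N : ℕ} (Y : Fin N → ℂ) : Prop :=
  ∀ k, conj (Y k) = Y (-k)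

section

variable {N : ℕ}

theorem isConjSymmetric_dft_ofReal (x : Fin N → ℝ) :
    IsConjSymmetric fun k : Fin N => ∑ n : Fin N,
      (x n : ℂ) * exp (-2 * (Real.pi : ℂ) * I * ((k : ℕ) : ℂ) * ((n : ℕ) : ℂ) / (N : ℂ)) := by
  intro k
  rw [map_sum]
  refine Finset.sum_congr rfl fun n _ => ?_
  rw [map_mul, conj_ofReal, conj_exp_neg_two_pi_I_div,
    exp_neg_two_pi_I_div_eq_of_dvd_add (Fin.dvd_val_neg_add_val k)]

theorem IsConjSymmetric.ite_mem {Y : Fin N → ℂ} (hY : IsConjSymmetric Y) {P : Finset (Fin N)}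
    (hP : ∀ k ∈ P, -k ∈ P) :
    IsConjSymmetric fun k => if k ∈ P then Y k else 0 := by
  intro k
  have hkP : k ∈ P ↔ -k ∈ P := ⟨hP k, fun h => neg_neg k ▸ hP (-k) h⟩
  simp only [hkP, apply_ite conj, hY k, map_zero]

theorem IsConjSymmetric.im_idft_eq_zero {Y : Fin N → ℂ} (hY : IsConjSymmetric Y) (n : Fin N) :
    ((1 / (N : ℂ)) * ∑ k : Fin N,
      Y k * exp (2 * (Real.pi : ℂ) * I * ((k : ℕ) : ℂ) * ((n : ℕ) : ℂ) / (N : ℂ))).im = 0 := by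
  rw [← conj_eq_iff_im, map_mul, map_sum, map_div₀, map_one, map_natCast]
  congr 1
  rw [← Equiv.sum_comp (Equiv.neg (Fin N))]
  refine Finset.sum_congr rfl fun k _ => ?_
  rw [Equiv.neg_apply, map_mul, conj_exp_two_pi_I_div, hY, neg_neg,
    exp_neg_two_pi_I_div_eq_of_dvd_add (Fin.dvd_val_neg_add_val k)]

end

theorem filtered_real_signal_is_real (N : ℕ) (hN : 0 < N) (x : Fin N → ℝ)
    (P : Finset (Fin N))
    (hP : ∀ k : Fin N, k ∈ P → (⟨(N - (k : ℕ)) % N, Nat.mod_lt _ hN⟩ : Fin N) ∈ P)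
    (DFT : (Fin N → ℂ) → (Fin N → ℂ))
    (hDFT : ∀ (z : Fin N → ℂ) (k : Fin N), DFT z k = ∑ n : Fin N,
      z n * Complex.exp (-2 * (Real.pi : ℂ) * Complex.I * ((k : ℕ) : ℂ) * ((n : ℕ) : ℂ) / (N : ℂ)))
    (IDFT : (Fin N → ℂ) → (Fin N → ℂ))
    (hIDFT : ∀ (Y : Fin N → ℂ) (n : Fin N), IDFT Y n = (1 / (N : ℂ)) * ∑ k : Fin N,
      Y k * Complex.exp (2 * (Real.pi : ℂ) * Complex.I * ((k : ℕ) : ℂ) * ((n : ℕ) : ℂ) / (N : ℂ)))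
    (F : (Fin N → ℂ) → (Fin N → ℂ))
    (hF : ∀ (Y : Fin N → ℂ) (k : Fin N), F Y k = if k ∈ P then Y k else 0) :
    ∀ n : Fin N, (IDFT (F (DFT (fun m => ((x m : ℂ))))) n).im = 0 := by
  intro n
  have hDFTx : DFT (fun m => (x m : ℂ)) = _ := funext (hDFT _)
  have hFY : F (DFT fun m => (x m : ℂ)) = _ := funext (hF _)
  rw [hIDFT, hFY, hDFTx]
  exact ((isConjSymmetric_dft_ofReal x).ite_mem hP).im_idft_eq_zero n
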